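/- arXiv:1412.2341 — 8 statements merged into one kernel-verified Lean document; each statement's English description precedes it below -/
import Mathlib

section
/- Let f, g, h be Boolean functions of n variables, let α be a cofactor of f relative to g and β a cofactor of f relative to h, and define F x = (α x && g x) || (β x && h x). Then F x = f x && (g x || h x) for all x; consequently F = f if and only if f ≤ g + h (pointwise). -/
/-- For cofactors α ∈ Ξ(f,g), β ∈ Ξ(f,h), the function F = α·g + β·h satisfies
F = f·(g + h); consequently F = f iff f ≤ g + h. -/
theorem cofactor_two_base (n : ℕ) (f g h α β : (Fin n → Bool) → Bool)
    (hα : ∀ x, α x && g x = f x && g x)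
    (hβ : ∀ x, β x && h x = f x && h x) :
    (∀ x, (α x && g x) || (β x && h x) = f x && (g x || h x)) ∧
    ((∀ x, (α x && g x) || (β x && h x) = f x) ↔
      (∀ x, f x = true → (g x || h x) = true)) := by
  constructor
  · intro x
    have h1 := hα x; have h2 := hβ x
    revert h1 h2
    cases f x <;> cases g x <;> cases h x <;> cases α x <;> cases β x <;> decide
  · constructor
    · intro hF x hfx
      have h1 := hα x; have h2 := hβ x; have h3 := hF x
      revert h1 h2 h3 hfx
      cases f x <;> cases g x <;> cases h x <;> cases α x <;> cases β x <;> decide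
    · intro hle x
      have h1 := hα x; have h2 := hβ x
      have h3 : f x = true → (g x || h x) = true := hle x
      revert h1 h2 h3
      cases f x <;> cases g x <;> cases h x <;> cases α x <;> cases β x <;> decide
end

section
/- Generalized cofactor expansion: let g₁, …, g_m be Boolean functions of n variables, let g = g₁ + ⋯ + g_m be their pointwise OR, and let f be a Boolean function with f ≤ g. Then for any choice of cofactors αᵢ ∈ Ξ(f, gᵢ) for i = 1, …, m, one has f x = ⋁_{i=1}^{m} (αᵢ x && gᵢ x) for all x. -/
/-- Generalized cofactor expansion: if f ≤ g₁ + ⋯ + g_m then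
f = Σᵢ αᵢ·gᵢ for any choice of cofactors αᵢ ∈ Ξ(f,gᵢ). -/
theorem generalized_cofactor_expansion (n m : ℕ)
    (g : Fin m → (Fin n → Bool) → Bool) (f : (Fin n → Bool) → Bool)
    (hf : ∀ x, f x = true → ∃ i, g i x = true)
    (α : Fin m → (Fin n → Bool) → Bool)
    (hα : ∀ i, ∀ x, α i x && g i x = f x && g i x) :
    ∀ x, f x = Finset.univ.sup (fun i => α i x && g i x) := by
  intro x
  cases hfx : f x with
  | false =>
    symm
    rw [show (false : Bool) = ⊥ from rfl, Finset.sup_eq_bot_iff]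
    intro i _
    have h := hα i x
    simp only [Bool.and_eq_true, decide_eq_true_eq] at h
    rw [hfx] at h
    exact absurd h.1.2 (by simp [h.2])
  | true =>
    obtain ⟨i, hi⟩ := hf x hfx
    have h := hα i x
    simp only [Bool.and_eq_true, decide_eq_true_eq] at h
    have hterm : (α i x && g i x) = true := by simp [h.1.1, h.2]
    have hle : (α i x && g i x) ≤ Finset.univ.sup (fun i => α i x && g i x) :=
      Finset.le_sup (f := fun j => α j x && g j x) (Finset.mem_univ i)
    rw [hterm] at hle
    exact (top_le_iff.mp hle).symm
end

section
/- Let g₁, …, g_m be Boolean functions of n variables with pointwise OR g = g₁ + ⋯ + g_m, and let f, h be Boolean functions with f ≤ g. If αᵢ ∈ Ξ(f, gᵢ) and βᵢ ∈ Ξ(h, gᵢ) for each i, then (f·h)(x) = ⋁_{i=1}^{m} ((αᵢ x && βᵢ x) && gᵢ x) for all x. -/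
/-- Expansion of a product: (f·h) = Σᵢ (αᵢ·βᵢ)·gᵢ when f ≤ g₁ + ⋯ + g_m. -/
theorem cofactor_expansion_mul (n m : ℕ)
    (g : Fin m → (Fin n → Bool) → Bool) (f h : (Fin n → Bool) → Bool)
    (hf : ∀ x, f x = true → ∃ i, g i x = true)
    (α β : Fin m → (Fin n → Bool) → Bool)
    (hα : ∀ i, ∀ x, α i x && g i x = f x && g i x)
    (hβ : ∀ i, ∀ x, β i x && g i x = h x && g i x) :
    ∀ x, (f x && h x) = Finset.univ.sup (fun i => (α i x && β i x) && g i x) := by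
  intro x
  have sup_iff : ∀ (t : Fin m → Bool),
      Finset.univ.sup t = true ↔ ∃ i, t i = true := by
    intro t
    constructor
    · intro hs
      by_contra hc
      push_neg at hc
      have : Finset.univ.sup t = ⊥ := (Finset.sup_eq_bot_iff t Finset.univ).mpr (by
        intro i _
        simpa using hc i)
      simp [this] at hs
    · rintro ⟨i, hi⟩
      have : t i ≤ Finset.univ.sup t := Finset.le_sup (Finset.mem_univ i)
      rw [hi] at this
      exact le_antisymm le_top this
  apply Bool.eq_iff_iff.mpr
  rw [sup_iff]
  constructor
  · intro hfh
    simp only [Bool.and_eq_true] at hfh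
    obtain ⟨hfx, hhx⟩ := hfh
    obtain ⟨i, hg⟩ := hf x hfx
    refine ⟨i, ?_⟩
    have h1 := hα i x
    have h2 := hβ i x
    rw [hfx, hg] at h1
    rw [hhx, hg] at h2
    simp at h1 h2
    simp [h1, h2, hg]
  · rintro ⟨i, hi⟩
    simp only [Bool.and_eq_true] at hi
    obtain ⟨⟨ha, hb⟩, hg⟩ := hi
    have h1 := hα i x
    have h2 := hβ i x
    rw [ha, hg] at h1
    rw [hb, hg] at h2
    simp at h1 h2
    simp [h1, h2]
end

section
/- Let g₁, …, g_m be Boolean functions of n variables whose pointwise OR is the constant function 1 (i.e., for every x there is an i with gᵢ x = true), let f be a Boolean function, and let αᵢ ∈ Ξ(f, gᵢ) for each i. Then f'(x) = ⋁_{i=1}^{m} (!(αᵢ x) && gᵢ x) for all x. -/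
lemma bool_sup_eq_true_iff {m : ℕ} (F : Fin m → Bool) :
    Finset.univ.sup F = true ↔ ∃ i, F i = true := by
  induction m with
  | zero => simp [Finset.sup]
  | succ k ih =>
    rw [Fin.univ_succ]
    simp [Finset.sup_insert, Bool.sup_eq_bor, Bool.or_eq_true, ih, Fin.exists_fin_succ,
      Function.comp]

/-- Expansion of the complement: f' = Σᵢ αᵢ'·gᵢ when g₁ + ⋯ + g_m = 1. -/
theorem cofactor_expansion_not (n m : ℕ)
    (g : Fin m → (Fin n → Bool) → Bool)
    (hg : ∀ x, ∃ i, g i x = true)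
    (f : (Fin n → Bool) → Bool)
    (α : Fin m → (Fin n → Bool) → Bool)
    (hα : ∀ i, ∀ x, α i x && g i x = f x && g i x) :
    ∀ x, (!(f x)) = Finset.univ.sup (fun i => (!(α i x)) && g i x) := by
  intro x
  cases hfx : f x with
  | true =>
    symm
    simp only [Bool.not_true]
    rw [← Bool.not_eq_true]
    rw [bool_sup_eq_true_iff]
    rintro ⟨i, hi⟩
    have := hα i x
    rw [hfx] at this
    simp only [Bool.and_eq_true, Bool.not_eq_true'] at hi
    rw [hi.1, hi.2] at this
    simp at this
  | false =>
    symm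
    simp only [Bool.not_false]
    rw [bool_sup_eq_true_iff]
    obtain ⟨i, hi⟩ := hg x
    refine ⟨i, ?_⟩
    have := hα i x
    rw [hfx, hi] at this
    simp only [Bool.and_true, Bool.false_and] at this
    rw [hi, Bool.and_true]
    simp at this
end

section
/- Let g₁, …, g_m be Boolean functions of n variables whose pointwise OR is the constant function 1 (i.e., for every x there is an i with gᵢ x = true), let f, h be Boolean functions, and let αᵢ ∈ Ξ(f, gᵢ), βᵢ ∈ Ξ(h, gᵢ) for each i. Then (f ⊕ h)(x) = ⋁_{i=1}^{m} ((αᵢ x ⊕ βᵢ x) && gᵢ x) for all x, where ⊕ is XOR. -/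
/-- Expansion of the XOR: (f ⊕ h) = Σᵢ (αᵢ ⊕ βᵢ)·gᵢ when g₁ + ⋯ + g_m = 1. -/
theorem cofactor_expansion_xor (n m : ℕ)
    (g : Fin m → (Fin n → Bool) → Bool)
    (hg : ∀ x, ∃ i, g i x = true)
    (f h : (Fin n → Bool) → Bool)
    (α β : Fin m → (Fin n → Bool) → Bool)
    (hα : ∀ i, ∀ x, α i x && g i x = f x && g i x)
    (hβ : ∀ i, ∀ x, β i x && g i x = h x && g i x) :
    ∀ x, (xor (f x) (h x)) =
      Finset.univ.sup (fun i => (xor (α i x) (β i x)) && g i x) := by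
  intro x
  have key : ∀ i, g i x = true →
      ((xor (α i x) (β i x)) && g i x) = xor (f x) (h x) := by
    intro i hi
    have h1 := hα i x
    have h2 := hβ i x
    simp only [Bool.and_eq_true, decide_eq_true_eq] at h1 h2
    simp [h1.1.1, ← h1.1.2, h2.1.1, ← h2.1.2, hi]
  apply le_antisymm
  · obtain ⟨i, hi⟩ := hg x
    calc xor (f x) (h x) = ((xor (α i x) (β i x)) && g i x) := (key i hi).symm
      _ ≤ Finset.univ.sup (fun i => (xor (α i x) (β i x)) && g i x) :=
        Finset.le_sup (f := fun i => (xor (α i x) (β i x)) && g i x) (Finset.mem_univ i)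
  · apply Finset.sup_le
    intro i _
    by_cases hi : g i x = true
    · exact le_of_eq (key i hi)
    · simp only [Bool.not_eq_true] at hi
      simp [hi]
end

section
/- Composition via cofactor expansion: let φ₁, …, φ_m be an orthonormal family of Boolean functions of n variables, let f be a Boolean function of n variables, let h₁, …, h_n be Boolean functions of n variables, and for each i, j let βᵢⱼ ∈ Ξ(hᵢ, φⱼ). Then for every x, f(h₁(x), …, h_n(x)) = ⋁_{j=1}^{m} ( f(β₁ⱼ(x), …, β_{nj}(x)) && φⱼ(x) ). -/
/-- Composition via cofactor expansion over an orthonormal family. -/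
theorem composition_cofactor_expansion (n m : ℕ)
    (φ : Fin m → (Fin n → Bool) → Bool)
    (horth : ∀ i j, i ≠ j → ∀ x, φ i x && φ j x = false)
    (hcover : ∀ x, ∃ i, φ i x = true)
    (f : (Fin n → Bool) → Bool)
    (h : Fin n → (Fin n → Bool) → Bool)
    (β : Fin n → Fin m → (Fin n → Bool) → Bool)
    (hβ : ∀ i j, ∀ x, β i j x && φ j x = h i x && φ j x) :
    ∀ x, f (fun i => h i x) =
      Finset.univ.sup (fun j => f (fun i => β i j x) && φ j x) := by
  intro x
  obtain ⟨j, hj⟩ := hcover x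
  have hfun : (fun i => h i x) = (fun i => β i j x) := by
    funext i
    have h1 := hβ i j x
    rw [Bool.and_eq_true, Bool.and_eq_true] at h1
    obtain ⟨⟨hb, hd⟩, _⟩ := h1
    have := of_decide_eq_true hd
    rw [hb, ← this, hj]
  have hterm : (f (fun i => β i j x) && φ j x) = f (fun i => h i x) := by
    rw [← hfun, hj, Bool.and_true]
  apply le_antisymm
  · calc f (fun i => h i x) = (f (fun i => β i j x) && φ j x) := hterm.symm
      _ ≤ _ := Finset.le_sup (f := fun j => f (fun i => β i j x) && φ j x) (Finset.mem_univ j)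
  · apply Finset.sup_le
    intro k _
    by_cases hk : k = j
    · subst hk; exact le_of_eq hterm
    · exfalso
      have h3 := horth k j hk x
      rw [Bool.and_eq_true] at h3
      obtain ⟨_, hd⟩ := h3
      have := of_decide_eq_true hd
      rw [hj] at this
      exact Bool.noConfusion this
end

section
/- Consistency condition: let g₁, …, g_m be nonzero Boolean functions of n variables with pointwise OR g = g₁ + ⋯ + g_m, let f be a Boolean function with f ≤ g, and let αᵢ ∈ Ξ(f, gᵢ) for each i. Then the equation f = 1 is consistent (there exists x with f x = true) if and only if there exists an index i and a point x such that αᵢ x = true and gᵢ x = true. -/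
/-- Consistency condition: f = 1 is consistent iff some system αᵢ = 1, gᵢ = 1 is consistent. -/
theorem consistency_condition (n m : ℕ)
    (g : Fin m → (Fin n → Bool) → Bool)
    (hgnz : ∀ i, ∃ x, g i x = true)
    (f : (Fin n → Bool) → Bool)
    (hf : ∀ x, f x = true → ∃ i, g i x = true)
    (α : Fin m → (Fin n → Bool) → Bool)
    (hα : ∀ i, ∀ x, α i x && g i x = f x && g i x) :
    (∃ x, f x = true) ↔ (∃ i, ∃ x, α i x = true ∧ g i x = true) := by
  constructor
  · rintro ⟨x, hx⟩
    obtain ⟨i, hi⟩ := hf x hx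
    have h := hα i x
    rw [hx, hi] at h
    simp at h
    exact ⟨i, x, h, hi⟩
  · rintro ⟨i, x, ha, hg⟩
    have h := hα i x
    rw [ha, hg] at h
    simp at h
    exact ⟨x, h⟩
end

section
/- Let φ₁, …, φ_m be an orthonormal family of nonzero Boolean functions of n variables, let f be a Boolean function, and let αᵢ ∈ Ξ(f, φᵢ) for each i. Then: (a) there exists x with f x = true if and only if there exist an index i and a point x with αᵢ x = true and φᵢ x = true; and (b) for every x with f x = true there is exactly one index i such that φᵢ x = true and αᵢ x = true. -/
/-- Consistency over an orthonormal base: f = 1 is consistent iff some system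
αᵢ = 1, φᵢ = 1 is consistent; and at any solution of f = 1 there is exactly one such index. -/
theorem consistency_orthonormal (n m : ℕ)
    (φ : Fin m → (Fin n → Bool) → Bool)
    (horth : ∀ i j, i ≠ j → ∀ x, φ i x && φ j x = false)
    (hcover : ∀ x, ∃ i, φ i x = true)
    (hnz : ∀ i, ∃ x, φ i x = true)
    (f : (Fin n → Bool) → Bool)
    (α : Fin m → (Fin n → Bool) → Bool)
    (hα : ∀ i, ∀ x, α i x && φ i x = f x && φ i x) :
    ((∃ x, f x = true) ↔ (∃ i, ∃ x, α i x = true ∧ φ i x = true)) ∧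
    (∀ x, f x = true → ∃! i, φ i x = true ∧ α i x = true) := by
  constructor
  · constructor
    · rintro ⟨x, hx⟩
      obtain ⟨i, hi⟩ := hcover x
      refine ⟨i, x, ?_, hi⟩
      have := hα i x
      rw [hi, hx] at this
      simpa using this
    · rintro ⟨i, x, ha, hp⟩
      refine ⟨x, ?_⟩
      have := hα i x
      rw [hp, ha] at this
      simpa using this.symm
  · intro x hx
    obtain ⟨i, hi⟩ := hcover x
    have hai : α i x = true := by
      have := hα i x; rw [hi, hx] at this; simpa using this
    refine ⟨i, ⟨hi, hai⟩, ?_⟩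
    rintro j ⟨hj, -⟩
    by_contra hne
    have := horth j i hne x
    rw [hj, hi] at this
    simp at this
end
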